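/- Let Φ = (1+√5)/2 and ψ(x) = log_Φ(√5·(log_Φ(√5·x) + x) − 5 + 3/x) − 2. Then for every natural number n ≥ 2, ψ(F_{n+2} − n + 1) ≥ n. -/

import Mathlib

/-!
Write `X = F_{n+2} - n + 1` and `φ̄ = (1 - √5) / 2`. Since `ψ(X) = log_φ (psiArg X) - 2`, the claim is
`φ^{n+2} ≤ psiArg X = √5 (log_φ (√5 X) + X) - 5 + 3 / X`. By Binet's formula
`√5 X = φ^{n+2} - φ̄^{n+2} - √5 (n - 1)`, so it suffices that `√5 (log_φ (√5 X) - n + 1) ≥ 5 + φ̄^{n+2}`.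
For `n ≥ 6` the linear term `√5 (n - 1)` is small against `φ^{n+1}`, so that `√5 X ≥ 1.2 φ^{n+1}` and,
as `1.2³ ≥ φ`, `log_φ (√5 X) ≥ n + 4/3`; then `√5 · 7/3 > 5.15 ≥ 5 + φ̄^{n+2}`.
The cases `n = 2, …, 5` are numerical checks.
-/

open Real

section

open scoped goldenRatio

namespace Real

theorem div_le_logb_of_pow_le {b y : ℝ} {p q : ℕ} (hb : 1 < b) (hq : 0 < q)
    (h : b ^ p ≤ y ^ q) : (p : ℝ) / q ≤ logb b y := by
  have hlog : p * log b ≤ q * log y := by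
    simpa only [log_pow] using log_le_log (pow_pos (by linarith) p) h
  rw [logb, div_le_div_iff₀ (by exact_mod_cast hq) (log_pos hb)]
  linarith

theorem sqrt_five_gt : (2.236067 : ℝ) < √5 := by
  rw [lt_sqrt (by norm_num)]; norm_num

theorem sqrt_five_lt : √5 < 2.236068 := by
  rw [sqrt_lt' (by norm_num)]; norm_num

theorem goldenRatio_gt : (1.6180335 : ℝ) < φ := by
  unfold goldenRatio; linarith [sqrt_five_gt]

theorem goldenRatio_lt : φ < 1.618034 := by
  unfold goldenRatio; linarith [sqrt_five_lt]

theorem abs_goldenConj_lt : |ψ| < 0.62 := by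
  unfold goldenConj
  rw [abs_lt]; constructor <;> linarith [sqrt_five_gt, sqrt_five_lt]

theorem sqrt_five_mul_fib (k : ℕ) : √5 * Nat.fib k = φ ^ k - ψ ^ k := by
  rw [coe_fib_eq]; field_simp

theorem goldenConj_pow_le {k : ℕ} (hk : 4 ≤ k) : ψ ^ k ≤ 0.15 :=
  calc ψ ^ k ≤ |ψ| ^ k := by rw [← abs_pow]; exact le_abs_self _
    _ ≤ 0.62 ^ k := pow_le_pow_left₀ (abs_nonneg _) abs_goldenConj_lt.le k
    _ ≤ 0.62 ^ 4 := pow_le_pow_of_le_one (by norm_num) (by norm_num) hk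
    _ ≤ 0.15 := by norm_num

theorem goldenRatio_pow_ge {n : ℕ} (hn : 6 ≤ n) : 3.5 * ((n : ℝ) - 1) ≤ φ ^ n := by
  induction n, hn using Nat.le_induction with
  | base =>
    have := pow_le_pow_left₀ (by norm_num) goldenRatio_gt.le 6
    norm_num at this ⊢; linarith
  | succ n hn ih =>
    have hn' : (6 : ℝ) ≤ n := by exact_mod_cast hn
    rw [pow_succ]; push_cast
    nlinarith [goldenRatio_gt]

end Real

noncomputable def psiArg (x : ℝ) : ℝ := √5 * (logb φ (√5 * x) + x) - 5 + 3 / x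

/-- The bound `p / (2q) ≤ log_φ (√5 X)`, certified by `φ^p ≤ (√5 X)^{2q} = (5 X²)^q`, reduces the claim
to a numerical inequality. -/
theorem goldenRatio_pow_le_psiArg_of_certificate {n p q : ℕ} {X : ℝ} (hX : 0 < X) (hq : 0 < q)
    (hpow : 1.618034 ^ p ≤ (5 * X ^ 2) ^ q)
    (hnum : 1.618034 ^ (n + 2) ≤ 2.236067 * (p / (2 * q) + X) - 5 + 3 / X) :
    φ ^ (n + 2) ≤ psiArg X := by
  have hlog : (p : ℝ) / (2 * q : ℕ) ≤ logb φ (√5 * X) := by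
    refine div_le_logb_of_pow_le one_lt_goldenRatio (by omega) ?_
    rw [pow_mul, mul_pow, sq_sqrt (by norm_num)]
    exact (pow_le_pow_left₀ goldenRatio_pos.le goldenRatio_lt.le p).trans hpow
  push_cast at hlog
  have hr : 0 ≤ (p : ℝ) / (2 * q) + X := by positivity
  have := mul_le_mul sqrt_five_gt.le (by linarith : _ ≤ logb φ (√5 * X) + X) hr (sqrt_nonneg 5)
  have := pow_le_pow_left₀ goldenRatio_pos.le goldenRatio_lt.le (n + 2)
  unfold psiArg
  linarith

theorem goldenRatio_pow_le_psiArg_of_six_le {n : ℕ} (hn : 6 ≤ n) :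
    φ ^ (n + 2) ≤ psiArg (Nat.fib (n + 2) - n + 1) := by
  set X : ℝ := Nat.fib (n + 2) - n + 1
  have hbinet : √5 * X = φ ^ (n + 2) - ψ ^ (n + 2) - √5 * (n - 1) := by
    simp only [X, mul_add, mul_sub, sqrt_five_mul_fib]; ring
  have hconj := goldenConj_pow_le (show 4 ≤ n + 2 by omega)
  have hn1 : (5 : ℝ) ≤ n - 1 := by
    have : (6 : ℝ) ≤ n := by exact_mod_cast hn
    linarith
  have hy : 1.2 * φ ^ (n + 1) ≤ √5 * X := by
    have hgap : 0.676 ≤ φ * (φ - 1.2) := by nlinarith [goldenRatio_sq, goldenRatio_lt]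
    have := mul_le_mul (goldenRatio_pow_ge hn) hgap (by norm_num) (pow_nonneg goldenRatio_pos.le n)
    have hsplit : φ ^ (n + 2) - 1.2 * φ ^ (n + 1) = φ ^ n * (φ * (φ - 1.2)) := by ring
    rw [hbinet]
    nlinarith [sqrt_five_lt]
  have hX : 0 < X :=
    pos_of_mul_pos_right ((by positivity : (0 : ℝ) < 1.2 * φ ^ (n + 1)).trans_le hy) (sqrt_nonneg 5)
  have hlog : ((3 * n + 4 : ℕ) : ℝ) / (3 : ℕ) ≤ logb φ (√5 * X) := by
    refine div_le_logb_of_pow_le one_lt_goldenRatio (by norm_num) ?_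
    calc φ ^ (3 * n + 4) = φ * (φ ^ (n + 1)) ^ 3 := by ring
      _ ≤ 1.2 ^ 3 * (φ ^ (n + 1)) ^ 3 := by gcongr; linarith [goldenRatio_lt]
      _ = (1.2 * φ ^ (n + 1)) ^ 3 := by ring
      _ ≤ (√5 * X) ^ 3 := by gcongr
  push_cast at hlog
  have := mul_le_mul_of_nonneg_left hlog (sqrt_nonneg 5)
  have : 0 < 3 / X := by positivity
  unfold psiArg
  linarith [sqrt_five_gt]

theorem goldenRatio_pow_le_psiArg {n : ℕ} (hn : 2 ≤ n) :
    φ ^ (n + 2) ≤ psiArg (Nat.fib (n + 2) - n + 1) := by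
  rcases lt_or_ge n 6 with hsmall | hlarge
  · interval_cases n <;> norm_num [Nat.fib_add_two]
    · exact goldenRatio_pow_le_psiArg_of_certificate (n := 2) (p := 6) (q := 1)
        (by norm_num) (by norm_num) (by norm_num) (by norm_num)
    · exact goldenRatio_pow_le_psiArg_of_certificate (n := 3) (p := 31) (q := 4)
        (by norm_num) (by norm_num) (by norm_num) (by norm_num)
    · exact goldenRatio_pow_le_psiArg_of_certificate (n := 4) (p := 10) (q := 1)
        (by norm_num) (by norm_num) (by norm_num) (by norm_num)
    · exact goldenRatio_pow_le_psiArg_of_certificate (n := 5) (p := 62) (q := 5)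
        (by norm_num) (by norm_num) (by norm_num) (by norm_num)
  · exact goldenRatio_pow_le_psiArg_of_six_le hlarge

end

theorem stmt13 (n : ℕ) (hn : 2 ≤ n) :
    let Φ : ℝ := (1 + Real.sqrt 5) / 2
    let ψ : ℝ → ℝ := fun x => Real.logb Φ (Real.sqrt 5 * (Real.logb Φ (Real.sqrt 5 * x) + x) - 5 + 3 / x) - 2
    ψ ((Nat.fib (n + 2) : ℝ) - n + 1) ≥ n := by
  intro Φ ψ
  show n ≤ logb goldenRatio (psiArg (Nat.fib (n + 2) - n + 1)) - 2
  have hpow := goldenRatio_pow_le_psiArg hn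
  have hlog : ((n + 2 : ℕ) : ℝ) / (1 : ℕ) ≤ logb goldenRatio (psiArg (Nat.fib (n + 2) - n + 1)) :=
    div_le_logb_of_pow_le one_lt_goldenRatio one_pos (by rwa [pow_one])
  push_cast at hlog
  linarith
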